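/- arXiv:2008.13406 — 5 statements merged into one kernel-verified Lean document; each statement's English description precedes it below -/
import Mathlib

section
/- Let w ≥ 2 be a word size, let r1, r2, r3, r4 ≤ w−1 be the rotation constants of the ChaCha quarter round Q, and let 1 ≤ r ≤ w−1 be a rotation amount. For w-bit words x0, x1, x2, x3 with intermediate values b0, b1, b2, b3 and outputs y0, y1, y2, y3 as in the definition of Q, the rotational pair propagates, i.e. (y0 ⋘ r, y1 ⋘ r, y2 ⋘ r, y3 ⋘ r) = Q(x0 ⋘ r, x1 ⋘ r, x2 ⋘ r, x3 ⋘ r), if and only if the following four conditions hold simultaneously: (x0 ⋘ r) ⊞ (x1 ⋘ r) = (x0 ⊞ x1) ⋘ r; (b3 ⋘ r) ⊞ (x2 ⋘ r) = (b3 ⊞ x2) ⋘ r; ((x0 ⊞ x1) ⋘ r) ⊞ (b1 ⋘ r) = (x0 ⊞ x1 ⊞ b1) ⋘ r; and (y3 ⋘ r) ⊞ ((b3 ⊞ x2) ⋘ r) = (y3 ⊞ b3 ⊞ x2) ⋘ r. -/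
/-!
Rotation by `r` commutes with xor and with the rotations inside `Q`, so each xor-rotate step of `Q`
is rotation-equivariant and injective in each argument: only the four modular additions can break
the rotational relation. `Q` is two half rounds (an addition, a xor-rotate, an addition, a
xor-rotate). A half round preserves the rotational relation iff its two additions do, and the
xor-rotate outputs of the second half round already force the intermediate state of the rotated
input to be the rotated intermediate state, so the two pairs of conditions combine.
-/

/-- The ChaCha quarter round with rotation constants `r1, r2, r3, r4`,
acting on quadruples of `w`-bit words. -/
def chachaQR {w : ℕ} (r1 r2 r3 r4 : ℕ)
    (x : BitVec w × BitVec w × BitVec w × BitVec w) :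
    BitVec w × BitVec w × BitVec w × BitVec w :=
  let b0 := x.1 + x.2.1
  let b3 := (b0 ^^^ x.2.2.2).rotateLeft r1
  let b2 := b3 + x.2.2.1
  let b1 := (b2 ^^^ x.2.1).rotateLeft r2
  let y0 := b0 + b1
  let y3 := (y0 ^^^ b3).rotateLeft r3
  let y2 := y3 + b2
  let y1 := (y2 ^^^ b1).rotateLeft r4
  (y0, y1, y2, y3)

namespace BitVec

variable {w : ℕ}

theorem rotateLeft_rotateLeft (x : BitVec w) (a b : ℕ) :
    (x.rotateLeft a).rotateLeft b = x.rotateLeft (a + b) := by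
  ext i hi
  have hw : 0 < w := by omega
  have := Nat.mod_lt a hw
  have := Nat.mod_lt b hw
  have := Nat.mod_lt (a + b) hw
  have hab := Nat.add_mod_eq_ite (k := w) (m := a) (n := b)
  simp only [getElem_rotateLeft]
  split_ifs at hab ⊢ <;> congr 1 <;> omega

theorem rotateLeft_zero (x : BitVec w) : x.rotateLeft 0 = x := by
  ext i hi
  simp [getElem_rotateLeft]

theorem rotateLeft_comm (x : BitVec w) (a b : ℕ) :
    (x.rotateLeft a).rotateLeft b = (x.rotateLeft b).rotateLeft a := by
  rw [rotateLeft_rotateLeft, rotateLeft_rotateLeft, Nat.add_comm]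

theorem rotateLeft_injective (r : ℕ) : Function.Injective fun x : BitVec w => x.rotateLeft r := by
  refine Function.LeftInverse.injective (g := fun x => x.rotateLeft (w - r % w)) fun x => ?_
  rcases Nat.eq_zero_or_pos w with rfl | hw
  · exact Subsingleton.elim _ _
  have hfull : (r + (w - r % w)) % w = 0 := by
    have := Nat.div_add_mod r w
    have := Nat.mod_lt r hw
    rw [show r + (w - r % w) = w * (r / w + 1) by rw [Nat.mul_succ]; omega, Nat.mul_mod_right]
  simp only [rotateLeft_rotateLeft, ← rotateLeft_mod_eq_rotateLeft (r := r + _), hfull,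
    rotateLeft_zero]

theorem rotateLeft_inj {x y : BitVec w} {r : ℕ} : x.rotateLeft r = y.rotateLeft r ↔ x = y :=
  (rotateLeft_injective r).eq_iff

theorem rotateLeft_xor (x y : BitVec w) (r : ℕ) :
    (x ^^^ y).rotateLeft r = x.rotateLeft r ^^^ y.rotateLeft r := by
  ext i hi
  simp only [getElem_rotateLeft, getElem_xor]
  split <;> rfl

theorem rotateLeft_xor_rotateLeft_left_iff {x y z : BitVec w} {r s : ℕ} :
    (x ^^^ z.rotateLeft r).rotateLeft s = ((y ^^^ z).rotateLeft s).rotateLeft r ↔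
      x = y.rotateLeft r := by
  rw [rotateLeft_comm _ s, rotateLeft_inj, rotateLeft_xor, xor_left_inj]

theorem rotateLeft_xor_rotateLeft_right_iff {x y z : BitVec w} {r s : ℕ} :
    (z.rotateLeft r ^^^ x).rotateLeft s = ((z ^^^ y).rotateLeft s).rotateLeft r ↔
      x = y.rotateLeft r := by
  rw [rotateLeft_comm _ s, rotateLeft_inj, rotateLeft_xor, xor_right_inj]

end BitVec

open BitVec

section

variable {w : ℕ}

def rotateLeftWords (r : ℕ) :
    BitVec w × BitVec w × BitVec w × BitVec w → BitVec w × BitVec w × BitVec w × BitVec w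
  | (a, b, c, d) => (a.rotateLeft r, b.rotateLeft r, c.rotateLeft r, d.rotateLeft r)

def halfRound (s t : ℕ) :
    BitVec w × BitVec w × BitVec w × BitVec w → BitVec w × BitVec w × BitVec w × BitVec w
  | (a, b, c, d) =>
    let d' := (a + b ^^^ d).rotateLeft s
    let c' := d' + c
    (a + b, (c' ^^^ b).rotateLeft t, c', d')

theorem chachaQR_eq_halfRound_halfRound (r1 r2 r3 r4 : ℕ)
    (x : BitVec w × BitVec w × BitVec w × BitVec w) :
    chachaQR r1 r2 r3 r4 x = halfRound r3 r4 (halfRound r1 r2 x) := rfl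

variable (r s t : ℕ)

theorem halfRound_rotateLeftWords_eq_iff (a b c d : BitVec w) :
    halfRound s t (rotateLeftWords r (a, b, c, d)) =
        rotateLeftWords r (halfRound s t (a, b, c, d)) ↔
      a.rotateLeft r + b.rotateLeft r = (a + b).rotateLeft r ∧
      ((a + b ^^^ d).rotateLeft s).rotateLeft r + c.rotateLeft r =
        ((a + b ^^^ d).rotateLeft s + c).rotateLeft r := by
  simp only [halfRound, rotateLeftWords, Prod.mk.injEq]
  constructor
  · rintro ⟨hab, -, hcd, -⟩
    exact ⟨hab, by rwa [rotateLeft_xor_rotateLeft_left_iff.2 hab] at hcd⟩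
  · rintro ⟨hab, hcd⟩
    rw [rotateLeft_xor_rotateLeft_left_iff.2 hab]
    exact ⟨hab, rotateLeft_xor_rotateLeft_left_iff.2 hcd, hcd, rfl⟩

/-- The odd words (positions 1 and 3) of a half round's output are its two xor-rotate outputs. -/
theorem halfRound_rotateLeftWords_eq_of_odd_words_eq
    (x : BitVec w × BitVec w × BitVec w × BitVec w)
    (hb : (halfRound s t (rotateLeftWords r x)).2.1 =
      (rotateLeftWords r (halfRound s t x)).2.1)
    (hd : (halfRound s t (rotateLeftWords r x)).2.2.2 =
      (rotateLeftWords r (halfRound s t x)).2.2.2) :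
    halfRound s t (rotateLeftWords r x) = rotateLeftWords r (halfRound s t x) := by
  obtain ⟨a, b, c, d⟩ := x
  simp only [halfRound, rotateLeftWords] at hb hd
  have hab := rotateLeft_xor_rotateLeft_left_iff.1 hd
  rw [hd] at hb
  exact (halfRound_rotateLeftWords_eq_iff r s t a b c d).2
    ⟨hab, rotateLeft_xor_rotateLeft_left_iff.1 hb⟩

theorem odd_words_eq_of_halfRound_eq_rotateLeftWords
    (X x : BitVec w × BitVec w × BitVec w × BitVec w)
    (h : halfRound s t X = rotateLeftWords r (halfRound s t x)) :
    X.2.1 = (rotateLeftWords r x).2.1 ∧ X.2.2.2 = (rotateLeftWords r x).2.2.2 := by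
  obtain ⟨A, B, C, D⟩ := X
  obtain ⟨a, b, c, d⟩ := x
  simp only [halfRound, rotateLeftWords, Prod.mk.injEq] at h ⊢
  obtain ⟨hab, hb, hc, hd⟩ := h
  rw [hab] at hb hc hd
  rw [hd] at hb hc
  rw [hc] at hb
  exact ⟨rotateLeft_xor_rotateLeft_right_iff.1 hb, rotateLeft_xor_rotateLeft_right_iff.1 hd⟩

theorem halfRound_comp_rotateLeftWords_eq_iff (s' t' : ℕ)
    (x : BitVec w × BitVec w × BitVec w × BitVec w) :
    halfRound s' t' (halfRound s t (rotateLeftWords r x)) =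
        rotateLeftWords r (halfRound s' t' (halfRound s t x)) ↔
      halfRound s t (rotateLeftWords r x) = rotateLeftWords r (halfRound s t x) ∧
        halfRound s' t' (rotateLeftWords r (halfRound s t x)) =
          rotateLeftWords r (halfRound s' t' (halfRound s t x)) := by
  constructor
  · intro h
    obtain ⟨hb, hd⟩ := odd_words_eq_of_halfRound_eq_rotateLeftWords r s' t' _ _ h
    have h1 := halfRound_rotateLeftWords_eq_of_odd_words_eq r s t x hb hd
    exact ⟨h1, h1 ▸ h⟩
  · rintro ⟨h1, h2⟩
    rw [h1, h2]

end

theorem chachaQR_rotational_conditions_general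
    (w : ℕ)
    (r1 r2 r3 r4 : ℕ)
    (r : ℕ)
    (x0 x1 x2 x3 b0 b1 b2 b3 y0 y1 y2 y3 : BitVec w)
    (hb0 : b0 = x0 + x1)
    (hb3 : b3 = (b0 ^^^ x3).rotateLeft r1)
    (hb2 : b2 = b3 + x2)
    (hb1 : b1 = (b2 ^^^ x1).rotateLeft r2)
    (hy0 : y0 = b0 + b1)
    (hy3 : y3 = (y0 ^^^ b3).rotateLeft r3)
    (hy2 : y2 = y3 + b2)
    (hy1 : y1 = (y2 ^^^ b1).rotateLeft r4) :
    chachaQR r1 r2 r3 r4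
        (x0.rotateLeft r, x1.rotateLeft r, x2.rotateLeft r, x3.rotateLeft r) =
      (y0.rotateLeft r, y1.rotateLeft r, y2.rotateLeft r, y3.rotateLeft r)
    ↔
    (x0.rotateLeft r + x1.rotateLeft r = (x0 + x1).rotateLeft r ∧
     b3.rotateLeft r + x2.rotateLeft r = (b3 + x2).rotateLeft r ∧
     (x0 + x1).rotateLeft r + b1.rotateLeft r = (x0 + x1 + b1).rotateLeft r ∧
     y3.rotateLeft r + (b3 + x2).rotateLeft r = (y3 + b3 + x2).rotateLeft r) := by
  have hb : halfRound r1 r2 (x0, x1, x2, x3) = (b0, b1, b2, b3) := by subst_vars; rfl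
  have hy : halfRound r3 r4 (b0, b1, b2, b3) = (y0, y1, y2, y3) := by subst_vars; rfl
  change chachaQR r1 r2 r3 r4 (rotateLeftWords r (x0, x1, x2, x3)) =
    rotateLeftWords r (y0, y1, y2, y3) ↔ _
  rw [chachaQR_eq_halfRound_halfRound, ← hy, ← hb, halfRound_comp_rotateLeftWords_eq_iff,
    halfRound_rotateLeftWords_eq_iff, hb, halfRound_rotateLeftWords_eq_iff]
  rw [← hb0, ← hb3, ← hy0, ← hy3, ← hb2, BitVec.add_assoc y3, ← hb2]
  exact and_assoc

theorem chachaQR_rotational_conditions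
    (w : ℕ) (hw : 2 ≤ w)
    (r1 r2 r3 r4 : ℕ)
    (hr1 : r1 ≤ w - 1) (hr2 : r2 ≤ w - 1) (hr3 : r3 ≤ w - 1) (hr4 : r4 ≤ w - 1)
    (r : ℕ) (hr : 1 ≤ r) (hrw : r ≤ w - 1)
    (x0 x1 x2 x3 b0 b1 b2 b3 y0 y1 y2 y3 : BitVec w)
    (hb0 : b0 = x0 + x1)
    (hb3 : b3 = (b0 ^^^ x3).rotateLeft r1)
    (hb2 : b2 = b3 + x2)
    (hb1 : b1 = (b2 ^^^ x1).rotateLeft r2)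
    (hy0 : y0 = b0 + b1)
    (hy3 : y3 = (y0 ^^^ b3).rotateLeft r3)
    (hy2 : y2 = y3 + b2)
    (hy1 : y1 = (y2 ^^^ b1).rotateLeft r4) :
    chachaQR r1 r2 r3 r4
        (x0.rotateLeft r, x1.rotateLeft r, x2.rotateLeft r, x3.rotateLeft r) =
      (y0.rotateLeft r, y1.rotateLeft r, y2.rotateLeft r, y3.rotateLeft r)
    ↔
    (x0.rotateLeft r + x1.rotateLeft r = (x0 + x1).rotateLeft r ∧
     b3.rotateLeft r + x2.rotateLeft r = (b3 + x2).rotateLeft r ∧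
     (x0 + x1).rotateLeft r + b1.rotateLeft r = (x0 + x1 + b1).rotateLeft r ∧
     y3.rotateLeft r + (b3 + x2).rotateLeft r = (y3 + b3 + x2).rotateLeft r) :=
  chachaQR_rotational_conditions_general w r1 r2 r3 r4 r x0 x1 x2 x3 b0 b1 b2 b3 y0 y1 y2 y3 hb0 hb3
    hb2 hb1 hy0 hy3 hy2 hy1
end

section
/- Let w ≥ 2 and let 1 ≤ r ≤ w−1. The number of pairs (a, b) of w-bit words such that (a ⋘ r) ⊞ (b ⋘ r) = (a ⊞ b) ⋘ r equals 2^(w−2) · (2^r + 1) · (2^(w−r) + 1). Equivalently, for a and b independent and uniformly distributed w-bit words, the probability that (a ⋘ r) ⊞ (b ⋘ r) = (a ⊞ b) ⋘ r equals (2^r + 1)(2^(w−r) + 1) / 2^(w+2). -/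
/-!
Write a `w`-bit word as `a = a₁ * 2 ^ (w - r) + a₀` with `a₀ < 2 ^ (w - r)` and `a₁ < 2 ^ r`;
rotating left by `r` swaps the two digits: `a ⋘ r = a₀ * 2 ^ r + a₁`. Comparing the digits of
`(a ⋘ r) ⊞ (b ⋘ r)` and `(a ⊞ b) ⋘ r`, they differ exactly by the carries out of `a₀ + b₀` and
`a₁ + b₁`, each of which lands in the other digit. Since both radices are at least `2`, the
equation holds iff neither digit sum carries. In radix `N` there are `N (N + 1) / 2` carry-free
digit pairs, so the count is `2 ^ r (2 ^ r + 1) / 2 * 2 ^ (w - r) (2 ^ (w - r) + 1) / 2`.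
-/

instance bitvecFintype {w : ℕ} : Fintype (BitVec w) :=
  Fintype.ofEquiv (Fin (2 ^ w)) ⟨BitVec.ofFin, BitVec.toFin, fun _ => rfl, fun _ => rfl⟩

open Finset

theorem Nat.add_mod_eq_mod_iff_of_lt {n a c : ℕ} (hc : c < n) : (a + c) % n = a % n ↔ c = 0 :=
  Nat.add_modEq_left_iff.trans ⟨fun h => Nat.eq_zero_of_dvd_of_lt h hc, fun h => h ▸ dvd_zero n⟩

theorem Nat.eq_mul_add_iff_div_eq_and_mod_eq {b q s n : ℕ} (hs : s < b) :
    n = q * b + s ↔ n / b = q ∧ n % b = s := by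
  rw [Nat.div_mod_unique (by omega)]; grind

def swapDigits (K R n : ℕ) : ℕ := n % K * R + n / K

theorem BitVec.toNat_rotateLeft_eq_swapDigits {w r : ℕ} (hr : r < w) (x : BitVec w) :
    (x.rotateLeft r).toNat = swapDigits (2 ^ (w - r)) (2 ^ r) x.toNat := by
  have hpow : 2 ^ w = 2 ^ (w - r) * 2 ^ r := by rw [← pow_add, Nat.sub_add_cancel hr.le]
  have hhigh : x.toNat / 2 ^ (w - r) < 2 ^ r :=
    Nat.div_lt_of_lt_mul (hpow ▸ x.isLt)
  rw [BitVec.toNat_rotateLeft, Nat.mod_eq_of_lt hr, Nat.shiftLeft_eq, Nat.shiftRight_eq_div_pow,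
    hpow, Nat.mul_mod_mul_right, swapDigits, Nat.mul_comm _ (2 ^ r),
    Nat.two_pow_add_eq_or_of_lt hhigh]

theorem swapDigits_add_mod_eq_iff {K R A B : ℕ} (hK : 2 ≤ K) (hR : 2 ≤ R) (hA : A < K * R)
    (hB : B < K * R) :
    (swapDigits K R A + swapDigits K R B) % (K * R) = swapDigits K R ((A + B) % (K * R)) ↔
      A % K + B % K < K ∧ A / K + B / K < R := by
  set S₀ := A % K + B % K
  set S₁ := A / K + B / K
  have hK₀ : 0 < K := by omega
  have hR₀ : 0 < R := by omega
  have hS₀ : S₀ < 2 * K := by have := Nat.mod_lt A hK₀; have := Nat.mod_lt B hK₀; omega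
  have hS₁ : S₁ < 2 * R := by
    have := Nat.div_lt_of_lt_mul hA; have := Nat.div_lt_of_lt_mul hB; omega
  have hsum : A + B = K * S₁ + S₀ := by
    have := Nat.div_add_mod A K; have := Nat.div_add_mod B K; grind
  have hlhs : swapDigits K R A + swapDigits K R B = R * S₀ + S₁ := by
    unfold swapDigits; ring
  have hrhs : swapDigits K R ((A + B) % (K * R)) = S₀ % K * R + (S₁ + S₀ / K) % R := by
    rw [swapDigits, Nat.mod_mul_right_mod, Nat.mod_mul_right_div_self, hsum, Nat.mul_add_mod,
      Nat.mul_add_div hK₀]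
  -- a carry out of either digit sum shows up in the other digit on the other side
  rw [hlhs, hrhs, Nat.eq_mul_add_iff_div_eq_and_mod_eq (Nat.mod_lt _ hR₀),
    Nat.mod_mul_left_div_self, Nat.mod_mul_left_mod, Nat.mul_add_div hR₀, Nat.mul_add_mod,
    Nat.add_mod_eq_mod_iff_of_lt (Nat.div_lt_of_lt_mul (by nlinarith)), @eq_comm _ (S₁ % R),
    Nat.add_mod_eq_mod_iff_of_lt (Nat.div_lt_of_lt_mul (by nlinarith)),
    Nat.div_eq_zero_iff_lt hR₀, Nat.div_eq_zero_iff_lt hK₀, and_comm]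

theorem BitVec.rotateLeft_add_rotateLeft_eq_iff {w r : ℕ} (hr : 0 < r) (hrw : r < w)
    (a b : BitVec w) :
    a.rotateLeft r + b.rotateLeft r = (a + b).rotateLeft r ↔
      a.toNat % 2 ^ (w - r) + b.toNat % 2 ^ (w - r) < 2 ^ (w - r) ∧
        a.toNat / 2 ^ (w - r) + b.toNat / 2 ^ (w - r) < 2 ^ r := by
  have hpow : 2 ^ w = 2 ^ (w - r) * 2 ^ r := by rw [← pow_add, Nat.sub_add_cancel hrw.le]
  rw [← BitVec.toNat_inj, BitVec.toNat_add, toNat_rotateLeft_eq_swapDigits hrw,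
    toNat_rotateLeft_eq_swapDigits hrw, toNat_rotateLeft_eq_swapDigits hrw, BitVec.toNat_add,
    hpow]
  exact swapDigits_add_mod_eq_iff (Nat.one_lt_two_pow (by omega)) (Nat.one_lt_two_pow (by omega))
    (hpow ▸ a.isLt) (hpow ▸ b.isLt)

theorem card_filter_fin_add_lt (N : ℕ) :
    2 * #{q : Fin N × Fin N | (q.1 : ℕ) + q.2 < N} = N * (N + 1) := by
  have hrow (x : Fin N) : #{y : Fin N | (x : ℕ) + y < N} = N - x := by
    simp_rw [Nat.add_comm (x : ℕ), ← Nat.lt_sub_iff_add_lt]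
    rw [Fin.card_filter_val_lt]
    omega
  rw [card_filter, Fintype.sum_prod_type]
  simp_rw [← card_filter, hrow]
  rw [Fin.sum_univ_eq_sum_range (N - ·)]
  calc 2 * ∑ i ∈ range N, (N - i) = 2 * ∑ i ∈ range (N + 1), (N - i) := by
        rw [sum_range_succ, Nat.sub_self, Nat.add_zero]
    _ = 2 * ∑ i ∈ range (N + 1), i := by
        simpa using sum_range_reflect (fun i => i) (N + 1)
    _ = N * (N + 1) := by
        rw [Nat.mul_comm, sum_range_id_mul_two, Nat.add_sub_cancel, Nat.mul_comm]

theorem card_filter_digitwise_add_lt {w R K : ℕ} (h : 2 ^ w = R * K) :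
    #{p : BitVec w × BitVec w |
        p.1.toNat % K + p.2.toNat % K < K ∧ p.1.toNat / K + p.2.toNat / K < R} =
      #{q : Fin K × Fin K | (q.1 : ℕ) + q.2 < K} * #{q : Fin R × Fin R | (q.1 : ℕ) + q.2 < R} := by
  let e : BitVec w ≃ Fin R × Fin K :=
    BitVec.equivFin.toEquiv.trans ((finCongr h).trans finProdFinEquiv.symm)
  let E : BitVec w × BitVec w ≃ (Fin K × Fin K) × (Fin R × Fin R) :=
    (e.prodCongr e).trans ((Equiv.prodProdProdComm _ _ _ _).trans (Equiv.prodComm _ _))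
  rw [← card_product, ← filter_product, univ_product_univ]
  exact card_equiv E fun p => by simp [E, e, Fin.divNat, Fin.modNat]

theorem four_mul_card_rotateLeft_add_eq {w r : ℕ} (hr : 0 < r) (hrw : r < w) :
    4 * #{p : BitVec w × BitVec w |
        p.1.rotateLeft r + p.2.rotateLeft r = (p.1 + p.2).rotateLeft r} =
      2 ^ w * ((2 ^ r + 1) * (2 ^ (w - r) + 1)) := by
  have hpow : 2 ^ w = 2 ^ r * 2 ^ (w - r) := by rw [← pow_add, Nat.add_sub_cancel' hrw.le]
  simp_rw [BitVec.rotateLeft_add_rotateLeft_eq_iff hr hrw, card_filter_digitwise_add_lt hpow]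
  rw [show ∀ x y : ℕ, 4 * (x * y) = (2 * x) * (2 * y) from fun x y => by ring,
    card_filter_fin_add_lt, card_filter_fin_add_lt, hpow]
  ring

theorem rotational_probability_modular_addition
    (w : ℕ) (hw : 2 ≤ w) (r : ℕ) (hr : 1 ≤ r) (hrw : r ≤ w - 1) :
    (Finset.univ.filter (fun p : BitVec w × BitVec w =>
        p.1.rotateLeft r + p.2.rotateLeft r = (p.1 + p.2).rotateLeft r)).card =
      2 ^ (w - 2) * (2 ^ r + 1) * (2 ^ (w - r) + 1) ∧
    ((Finset.univ.filter (fun p : BitVec w × BitVec w =>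
        p.1.rotateLeft r + p.2.rotateLeft r = (p.1 + p.2).rotateLeft r)).card : ℚ)
      / 2 ^ (2 * w)
      = ((2 ^ r + 1) * (2 ^ (w - r) + 1) : ℚ) / 2 ^ (w + 2) := by
  have hpow : 2 ^ w = 4 * 2 ^ (w - 2) := by
    rw [show 4 = 2 ^ 2 by rfl, ← pow_add, Nat.add_sub_cancel' hw]
  have hcount : #{p : BitVec w × BitVec w |
      p.1.rotateLeft r + p.2.rotateLeft r = (p.1 + p.2).rotateLeft r} =
        2 ^ (w - 2) * (2 ^ r + 1) * (2 ^ (w - r) + 1) := by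
    refine Nat.eq_of_mul_eq_mul_left four_pos ?_
    rw [four_mul_card_rotateLeft_add_eq hr (by omega), hpow]
    ring
  refine ⟨hcount, ?_⟩
  rw [hcount, show 2 * w = (w - 2) + (w + 2) by omega, pow_add]
  push_cast
  field_simp
end

section
/- Let w ≥ 2, let 1 ≤ r ≤ w−1, and let a_1, …, a_k be w-bit words. Write each a_i (viewed as an integer in [0, 2^w)) as a_i = a_i^L · 2^(w−r) + a_i^R with 0 ≤ a_i^L ≤ 2^r − 1 and 0 ≤ a_i^R ≤ 2^(w−r) − 1, and set m = ⌊(Σ_{i=1}^k a_i^L) / 2^r⌋ and t = ⌊(Σ_{i=1}^k a_i^R) / 2^(w−r)⌋. Then the equality (a_1 ⋘ r) ⊞ ⋯ ⊞ (a_k ⋘ r) = (a_1 ⊞ ⋯ ⊞ a_k) ⋘ r holds if and only if 2^r divides t and 2^(w−r) divides m. -/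
/-!
Cut every word after its top `r` bits into a high part and a low part of `w - r` bits, and let
`H` and `L` be the sums of the high and of the low parts, so that `m = H / 2^r` and
`t = L / 2^(w-r)`. Rotation swaps the two parts of a word, so the sum of the rotated words is
`((L + m) % 2^(w-r)) * 2^r + H % 2^r`: the carry `m` out of the high parts wraps around into the
low block. Before rotating the plain sum, the carry `t` out of the low parts lands in the high
block, so the right side is `(L % 2^(w-r)) * 2^r + (H + t) % 2^r`. Comparing the two blocks
gives `2^(w-r) ∣ m` and `2^r ∣ t`.
-/

theorem Nat.mul_add_div_of_lt {q x c : ℕ} (hc : c < q) : (x * q + c) / q = x := by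
  rw [mul_comm, Nat.mul_add_div (by omega), Nat.div_eq_of_lt hc, add_zero]

theorem Nat.mul_add_mod_mul_of_lt {p q a c : ℕ} (hc : c < q) :
    (a * q + c) % (p * q) = a % p * q + c := by
  rw [mul_comm p q, Nat.mod_mul, Nat.mul_add_mod_of_lt hc, Nat.mul_add_div_of_lt hc, add_comm,
    mul_comm]

theorem Nat.mul_add_eq_mul_add_iff {p x y x' y' : ℕ} (hy : y < p) (hy' : y' < p) :
    x * p + y = x' * p + y' ↔ x = x' ∧ y = y' := by
  refine ⟨fun h => ⟨?_, ?_⟩, by rintro ⟨rfl, rfl⟩; rfl⟩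
  · calc x = (x * p + y) / p := (Nat.mul_add_div_of_lt hy).symm
      _ = x' := by rw [h, Nat.mul_add_div_of_lt hy']
  · calc y = (x * p + y) % p := (Nat.mul_add_mod_of_lt hy).symm
      _ = y' := by rw [h, Nat.mul_add_mod_of_lt hy']

namespace BitVec

theorem toNat_finset_sum {w : ℕ} {ι : Type*} (s : Finset ι) (a : ι → BitVec w) :
    (∑ i ∈ s, a i).toNat = (∑ i ∈ s, (a i).toNat) % 2 ^ w := by
  rw [← toNat_ofNat, ← natCast_eq_ofNat, Nat.cast_sum]
  simp

theorem toNat_rotateLeft_of_le {w r : ℕ} (h : r ≤ w) (x : BitVec w) :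
    (x.rotateLeft r).toNat = x.toNat % 2 ^ (w - r) * 2 ^ r + x.toNat / 2 ^ (w - r) := by
  rcases h.lt_or_eq with h | rfl
  · have hw : 2 ^ w = 2 ^ (w - r) * 2 ^ r := by rw [← pow_add, Nat.sub_add_cancel h.le]
    have hhigh : x.toNat / 2 ^ (w - r) < 2 ^ r :=
      Nat.div_lt_of_lt_mul (hw ▸ x.isLt)
    rw [toNat_rotateLeft, Nat.mod_eq_of_lt h, Nat.shiftLeft_eq, Nat.shiftRight_eq_div_pow, hw,
      Nat.mul_mod_mul_right, ← Nat.shiftLeft_eq, ← Nat.shiftLeft_add_eq_or_of_lt hhigh,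
      Nat.shiftLeft_eq]
  · rw [← rotateLeft_mod_eq_rotateLeft, Nat.mod_self, toNat_rotateLeft]
    simp [Nat.shiftRight_eq_div_pow, Nat.div_eq_of_lt x.isLt, Nat.mod_eq_of_lt x.isLt, Nat.mod_one]

section RotateSum

variable {w r : ℕ} {ι : Type*} (s : Finset ι) (a : ι → BitVec w)

theorem toNat_sum_rotateLeft (h : r ≤ w) :
    (∑ i ∈ s, (a i).rotateLeft r).toNat =
      ((∑ i ∈ s, (a i).toNat % 2 ^ (w - r)) + (∑ i ∈ s, (a i).toNat / 2 ^ (w - r)) / 2 ^ r)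
        % 2 ^ (w - r) * 2 ^ r + (∑ i ∈ s, (a i).toNat / 2 ^ (w - r)) % 2 ^ r := by
  simp only [toNat_finset_sum, toNat_rotateLeft_of_le h, Finset.sum_add_distrib,
    ← Finset.sum_mul]
  generalize ∑ i ∈ s, (a i).toNat % 2 ^ (w - r) = low
  generalize ∑ i ∈ s, (a i).toNat / 2 ^ (w - r) = high
  have hdigits : low * 2 ^ r + high = (low + high / 2 ^ r) * 2 ^ r + high % 2 ^ r := by
    linarith [Nat.div_add_mod' high (2 ^ r)]
  rw [hdigits, ← Nat.pow_sub_mul_pow 2 h,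
    Nat.mul_add_mod_mul_of_lt (Nat.mod_lt _ (by positivity))]

theorem toNat_rotateLeft_sum (h : r ≤ w) :
    ((∑ i ∈ s, a i).rotateLeft r).toNat =
      (∑ i ∈ s, (a i).toNat % 2 ^ (w - r)) % 2 ^ (w - r) * 2 ^ r +
        ((∑ i ∈ s, (a i).toNat / 2 ^ (w - r)) +
          (∑ i ∈ s, (a i).toNat % 2 ^ (w - r)) / 2 ^ (w - r)) % 2 ^ r := by
  have hsplit : ∑ i ∈ s, (a i).toNat =
      (∑ i ∈ s, (a i).toNat / 2 ^ (w - r)) * 2 ^ (w - r) +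
        ∑ i ∈ s, (a i).toNat % 2 ^ (w - r) := by
    simp only [Finset.sum_mul, ← Finset.sum_add_distrib, Nat.div_add_mod']
  rw [toNat_rotateLeft_of_le h, toNat_finset_sum, hsplit]
  generalize ∑ i ∈ s, (a i).toNat % 2 ^ (w - r) = low
  generalize ∑ i ∈ s, (a i).toNat / 2 ^ (w - r) = high
  have hlow : low % 2 ^ (w - r) < 2 ^ (w - r) := Nat.mod_lt _ (by positivity)
  have hdigits : high * 2 ^ (w - r) + low =
      (high + low / 2 ^ (w - r)) * 2 ^ (w - r) + low % 2 ^ (w - r) := by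
    linarith [Nat.div_add_mod' low (2 ^ (w - r))]
  rw [hdigits, ← Nat.pow_sub_mul_pow 2 h, mul_comm (2 ^ (w - r)), Nat.mul_add_mod_mul_of_lt hlow,
    Nat.mul_add_mod_of_lt hlow, Nat.mul_add_div_of_lt hlow]

end RotateSum

end BitVec

theorem rotational_sum_iff_carries_general
    (w : ℕ) (r : ℕ) (hrw : r ≤ w - 1)
    (k : ℕ) (a : Fin k → BitVec w)
    (aL aR : Fin k → ℕ)
    (haL : ∀ i, aL i = (a i).toNat / 2 ^ (w - r))
    (haR : ∀ i, aR i = (a i).toNat % 2 ^ (w - r))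
    (m t : ℕ)
    (hm : m = (∑ i, aL i) / 2 ^ r)
    (ht : t = (∑ i, aR i) / 2 ^ (w - r)) :
    (∑ i, (a i).rotateLeft r) = (∑ i, a i).rotateLeft r ↔
      2 ^ r ∣ t ∧ 2 ^ (w - r) ∣ m := by
  have hr : r ≤ w := hrw.trans (Nat.sub_le w 1)
  simp only [haL, haR] at hm ht
  rw [← BitVec.toNat_inj, BitVec.toNat_sum_rotateLeft _ _ hr, BitVec.toNat_rotateLeft_sum _ _ hr,
    ← hm, ← ht, Nat.mul_add_eq_mul_add_iff (Nat.mod_lt _ (by positivity))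
      (Nat.mod_lt _ (by positivity)), and_comm]
  exact and_congr (eq_comm.trans Nat.add_modEq_left_iff) Nat.add_modEq_left_iff

theorem rotational_sum_iff_carries
    (w : ℕ) (hw : 2 ≤ w) (r : ℕ) (hr : 1 ≤ r) (hrw : r ≤ w - 1)
    (k : ℕ) (a : Fin k → BitVec w)
    (aL aR : Fin k → ℕ)
    (haL : ∀ i, aL i = (a i).toNat / 2 ^ (w - r))
    (haR : ∀ i, aR i = (a i).toNat % 2 ^ (w - r))
    (m t : ℕ)
    (hm : m = (∑ i, aL i) / 2 ^ r)
    (ht : t = (∑ i, aR i) / 2 ^ (w - r)) :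
    (∑ i, (a i).rotateLeft r) = (∑ i, a i).rotateLeft r ↔
      2 ^ r ∣ t ∧ 2 ^ (w - r) ∣ m :=
  rotational_sum_iff_carries_general w r hrw k a aL aR haL haR m t hm ht
end

section
/- Let w ≥ 2, let 1 ≤ r ≤ w−1, and let k ≥ 1. The number of k-tuples (a_1, …, a_k) of w-bit words such that (a_1 ⋘ r) ⊞ ⋯ ⊞ (a_k ⋘ r) = (a_1 ⊞ ⋯ ⊞ a_k) ⋘ r equals F(r, k, w) · F(w−r, k, w), where for 1 ≤ q ≤ w−1, F(q, k, w) = Σ_{h=0}^{⌊k(2^q − 1)/2^w⌋} Σ_{j=0}^{k} (−1)^j C(k, j) [ C(h·2^w − (j−1)·2^q − 1 + k, h·2^w − (j−1)·2^q − 1) − C(h·2^w − j·2^q − 1 + k, h·2^w − j·2^q − 1) ]. Equivalently, for independent uniformly distributed a_1, …, a_k, the probability of the equality is F(r, k, w) · F(w−r, k, w) / 2^(kw). -/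
/-- Binomial coefficient on integers, equal to `0` when the lower argument is
negative (the upper argument is nonnegative in all occurrences below). -/
def intChoose (n m : ℤ) : ℤ :=
  if 0 ≤ m then ((n.toNat).choose m.toNat : ℤ) else 0

/-- The counting function `F(q, k, w)` from Proposition 2. -/
def Fcount (q k w : ℕ) : ℤ :=
  ∑ h ∈ Finset.range (k * (2 ^ q - 1) / 2 ^ w + 1),
    ∑ j ∈ Finset.range (k + 1),
      (-1 : ℤ) ^ j * (k.choose j : ℤ) *
        (intChoose ((h : ℤ) * 2 ^ w - ((j : ℤ) - 1) * 2 ^ q - 1 + k)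
            ((h : ℤ) * 2 ^ w - ((j : ℤ) - 1) * 2 ^ q - 1) -
         intChoose ((h : ℤ) * 2 ^ w - (j : ℤ) * 2 ^ q - 1 + k)
            ((h : ℤ) * 2 ^ w - (j : ℤ) * 2 ^ q - 1))

/-!
Write `w = r + q` and split each word as `a = 2^q H + L` with `H < 2^r`, `L < 2^q`; then
`a ⋘ r = 2^r L + H`. Comparing `(∑ a) ⋘ r` and `∑ (a ⋘ r)` digit by digit shows that they agree
exactly when neither sum overflows into the other half modulo `2^w`, i.e. when
`(∑ H) mod 2^w < 2^r` and `(∑ L) mod 2^w < 2^q`; so the count is a product of two counts of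
tuples of digits. The number of `k`-tuples in `[0, m)` with sum at most `N` is the coefficient
of `X^N` in `(1 - X^m)^k / (1 - X)^(k+1)`, an alternating sum of binomial coefficients, and
`F(q, k, w)` sums, over the quotient `h` of the digit sum by `2^w`, the number of tuples whose
sum lies in `[h 2^w, h 2^w + 2^q)`.
-/

open Finset

theorem Nat.mod_mul_lt_iff {A R Q : ℕ} (hR : 0 < R) : A % (R * Q) < R ↔ Q ∣ A / R := by
  rw [Nat.mod_mul, Nat.dvd_iff_mod_eq_zero]
  have hA := Nat.mod_lt A hR
  constructor
  · intro h
    by_contra hne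
    have := Nat.le_mul_of_pos_right R (Nat.pos_of_ne_zero hne)
    omega
  · intro h
    rwa [h, Nat.mul_zero, Nat.add_zero]

theorem Nat.add_mul_eq_add_mul_iff {R a b c d : ℕ} (ha : a < R) (hc : c < R) :
    a + R * b = c + R * d ↔ a = c ∧ b = d := by
  refine ⟨fun h => ?_, fun ⟨hac, hbd⟩ => hac ▸ hbd ▸ rfl⟩
  have hR : 0 < R := by omega
  have hdiv := congrArg (· / R) h
  have hmod := congrArg (· % R) h
  simp only [Nat.add_mul_div_left _ _ hR, Nat.div_eq_of_lt ha, Nat.div_eq_of_lt hc,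
    Nat.add_mul_mod_self_left, Nat.mod_eq_of_lt ha, Nat.mod_eq_of_lt hc] at hdiv hmod
  omega

-- `x % Q * R + x / Q` is `x = Q * a + b` (`a < R`, `b < Q`) with its two digits swapped: this is
-- what `rotateLeft` does to `toNat` (see `BitVec.toNat_rotateLeft_add`).
theorem Nat.mul_add_mod_eq_swap_iff {R Q A B : ℕ} (hR : 0 < R) (hQ : 0 < Q) :
    (R * B + A) % (R * Q) = (Q * A + B) % (R * Q) % Q * R + (Q * A + B) % (R * Q) / Q ↔
      A % (R * Q) < R ∧ B % (R * Q) < Q := by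
  have hL : (R * B + A) % (R * Q) = A % R + R * ((B + A / R) % Q) := by
    rw [Nat.mod_mul, Nat.mul_add_mod, Nat.mul_add_div hR]
  have hS : (Q * A + B) % (R * Q) = B % Q + Q * ((A + B / Q) % R) := by
    rw [Nat.mul_comm R Q, Nat.mod_mul, Nat.mul_add_mod, Nat.mul_add_div hQ]
  have hSmod : (B % Q + Q * ((A + B / Q) % R)) % Q = B % Q := by
    rw [Nat.add_mul_mod_self_left, Nat.mod_mod]
  have hSdiv : (B % Q + Q * ((A + B / Q) % R)) / Q = (A + B / Q) % R := by
    rw [Nat.add_mul_div_left _ _ hQ, Nat.div_eq_of_lt (Nat.mod_lt _ hQ), Nat.zero_add]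
  rw [hL, hS, hSmod, hSdiv, Nat.mul_comm (B % Q), Nat.add_comm (R * _),
    Nat.add_mul_eq_add_mul_iff (Nat.mod_lt _ hR) (Nat.mod_lt _ hR),
    Nat.mul_comm R Q, Nat.mod_mul_lt_iff hQ, Nat.mul_comm Q R, Nat.mod_mul_lt_iff hR,
    ← Nat.add_modEq_left_iff, ← Nat.add_modEq_left_iff, and_comm]
  exact and_congr Iff.rfl ⟨Nat.ModEq.symm, Nat.ModEq.symm⟩

namespace BitVec

theorem toNat_rotateLeft_add (r q : ℕ) (x : BitVec (r + q)) :
    (x.rotateLeft r).toNat = x.toNat % 2 ^ q * 2 ^ r + x.toNat / 2 ^ q := by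
  rcases Nat.eq_zero_or_pos q with rfl | hq
  · have hx : x.toNat < 2 ^ r := x.isLt
    simp [Nat.shiftRight_eq_div_pow, Nat.div_eq_of_lt hx, Nat.mod_one]
  have hx : x.toNat / 2 ^ q < 2 ^ r := by
    rw [Nat.div_lt_iff_lt_mul (Nat.two_pow_pos q), ← pow_add]
    exact x.isLt
  rw [toNat_rotateLeft, Nat.mod_eq_of_lt (by omega : r < r + q), Nat.add_sub_cancel_left,
    Nat.shiftLeft_eq, Nat.shiftRight_eq_div_pow, pow_add, Nat.mul_comm (2 ^ r),
    Nat.mul_mod_mul_right, ← Nat.shiftLeft_eq, ← Nat.shiftLeft_add_eq_or_of_lt hx]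

theorem toNat_finsetSum {w : ℕ} {ι : Type*} (s : Finset ι) (x : ι → BitVec w) :
    (∑ i ∈ s, x i).toNat = (∑ i ∈ s, (x i).toNat) % 2 ^ w := by
  induction s using Finset.cons_induction with
  | empty => simp
  | cons a s ha ih => rw [sum_cons, sum_cons, toNat_add, ih, Nat.add_mod_mod]

theorem finsetSum_rotateLeft_eq_iff {r q : ℕ} {ι : Type*} (s : Finset ι)
    (a : ι → BitVec (r + q)) :
    ∑ i ∈ s, (a i).rotateLeft r = (∑ i ∈ s, a i).rotateLeft r ↔
      (∑ i ∈ s, (a i).toNat / 2 ^ q) % 2 ^ (r + q) < 2 ^ r ∧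
        (∑ i ∈ s, (a i).toNat % 2 ^ q) % 2 ^ (r + q) < 2 ^ q := by
  have hrot : ∑ i ∈ s, ((a i).rotateLeft r).toNat =
      2 ^ r * ∑ i ∈ s, (a i).toNat % 2 ^ q + ∑ i ∈ s, (a i).toNat / 2 ^ q := by
    rw [Nat.mul_comm (2 ^ r), sum_mul, ← sum_add_distrib]
    exact sum_congr rfl fun i _ => toNat_rotateLeft_add r q (a i)
  have hsum : ∑ i ∈ s, (a i).toNat =
      2 ^ q * ∑ i ∈ s, (a i).toNat / 2 ^ q + ∑ i ∈ s, (a i).toNat % 2 ^ q := by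
    simp only [mul_sum, ← sum_add_distrib, Nat.div_add_mod]
  rw [toNat_eq, toNat_finsetSum, toNat_rotateLeft_add, toNat_finsetSum, hrot, hsum, pow_add]
  exact Nat.mul_add_mod_eq_swap_iff (Nat.two_pow_pos r) (Nat.two_pow_pos q)

def splitEquiv (r q : ℕ) : BitVec (r + q) ≃ Fin (2 ^ r) × Fin (2 ^ q) :=
  equivFin.toEquiv.trans ((finCongr (pow_add 2 r q)).trans finProdFinEquiv.symm)

@[simp] theorem splitEquiv_fst_val {r q : ℕ} (x : BitVec (r + q)) :
    ((splitEquiv r q x).1 : ℕ) = x.toNat / 2 ^ q := rfl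

@[simp] theorem splitEquiv_snd_val {r q : ℕ} (x : BitVec (r + q)) :
    ((splitEquiv r q x).2 : ℕ) = x.toNat % 2 ^ q := rfl

end BitVec

theorem card_sum_rotateLeft_eq {ι : Type*} [Fintype ι] [DecidableEq ι] (r q : ℕ) :
    #{a : ι → BitVec (r + q) | ∑ i, (a i).rotateLeft r = (∑ i, a i).rotateLeft r} =
      #{H : ι → Fin (2 ^ r) | (∑ i, (H i : ℕ)) % 2 ^ (r + q) < 2 ^ r} *
        #{L : ι → Fin (2 ^ q) | (∑ i, (L i : ℕ)) % 2 ^ (r + q) < 2 ^ q} := by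
  rw [← card_product, ← filter_product]
  refine card_equiv ((Equiv.piCongrRight fun _ => BitVec.splitEquiv r q).trans
    (Equiv.arrowProdEquivProdArrow _ _ _)) fun a => ?_
  simp [BitVec.finsetSum_rotateLeft_eq_iff]

section

open PowerSeries

theorem geom_sum_pow_eq_sum_pi {R : Type*} [CommSemiring R] (x : R) (k m : ℕ) :
    (∑ v ∈ range m, x ^ v) ^ k = ∑ f : Fin k → Fin m, x ^ ∑ i, (f i : ℕ) := by
  rw [← Fin.sum_univ_eq_sum_range, ← Fin.prod_const, prod_univ_sum, Fintype.piFinset_univ]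
  simp only [prod_pow_eq_pow_sum]

theorem card_sum_le_eq_coeff (k m N : ℕ) :
    (#{f : Fin k → Fin m | ∑ i, (f i : ℕ) ≤ N} : ℤ) =
      coeff N ((∑ v ∈ range m, (X : ℤ⟦X⟧) ^ v) ^ k * PowerSeries.mk fun _ => 1) := by
  rw [natCast_card_filter, geom_sum_pow_eq_sum_pi, sum_mul, map_sum]
  simp [coeff_X_pow_mul']

theorem card_sum_le_eq (k m N : ℕ) :
    (#{f : Fin k → Fin m | ∑ i, (f i : ℕ) ≤ N} : ℤ) =
      ∑ j ∈ range (k + 1), (-1) ^ j * k.choose j *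
        if j * m ≤ N then ((k + (N - j * m)).choose k : ℤ) else 0 := by
  have hgeom : (∑ v ∈ range m, (X : ℤ⟦X⟧) ^ v) * (1 - X) = 1 - X ^ m := geom_sum_mul_neg X m
  have hmk : (PowerSeries.mk fun _ => 1 : ℤ⟦X⟧) =
      (1 - X) ^ k * PowerSeries.mk fun n => ((k + n).choose k : ℤ) := by
    have := one_sub_pow_mul_invOneSubPow_val_add_eq_invOneSubPow_val ℤ 1 k
    rw [Nat.add_comm, invOneSubPow_val_succ_eq_mk_add_choose,
      invOneSubPow_val_succ_eq_mk_add_choose] at this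
    simpa using this.symm
  rw [card_sum_le_eq_coeff, hmk, ← mul_assoc, ← mul_pow, hgeom, sub_eq_neg_add, add_pow,
    sum_mul, map_sum]
  refine sum_congr rfl fun j _ => ?_
  rw [neg_pow, one_pow, mul_one]
  have hterm : ((-1) ^ j * (X ^ m) ^ j * (k.choose j : ℤ⟦X⟧) *
      PowerSeries.mk fun n => ((k + n).choose k : ℤ)) =
      C ((-1) ^ j * k.choose j : ℤ) *
        (X ^ (j * m) * PowerSeries.mk fun n => ((k + n).choose k : ℤ)) := by
    simp only [map_mul, map_pow, map_neg, map_one, map_natCast]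
    ring
  rw [hterm, coeff_C_mul, coeff_X_pow_mul']
  split_ifs <;> simp

end

theorem intChoose_of_neg {n m : ℤ} (hm : m < 0) : intChoose n m = 0 := by
  simp [intChoose, not_le.2 hm]

theorem intChoose_natCast_add_natCast (a k : ℕ) : intChoose (a + k) a = (k + a).choose k := by
  rw [intChoose, if_pos (Nat.cast_nonneg a), ← Nat.cast_add, Int.toNat_natCast, Int.toNat_natCast,
    Nat.add_comm k a, Nat.choose_symm_add]

theorem card_sum_le_eq_sum_intChoose (k m : ℕ) (N : ℤ) :
    (#{f : Fin k → Fin m | ((∑ i, (f i : ℕ) : ℕ) : ℤ) ≤ N} : ℤ) =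
      ∑ j ∈ range (k + 1), (-1) ^ j * k.choose j * intChoose (N - j * m + k) (N - j * m) := by
  rcases lt_or_ge N 0 with hN | hN
  · rw [card_eq_zero.2 (filter_eq_empty_iff.2 fun f _ => by omega), Nat.cast_zero, eq_comm]
    refine sum_eq_zero fun j _ => ?_
    have hjm : (0 : ℤ) ≤ j * m := by positivity
    rw [intChoose_of_neg (by omega), mul_zero]
  lift N to ℕ using hN
  simp only [Nat.cast_le, card_sum_le_eq]
  refine sum_congr rfl fun j _ => ?_
  congr 1
  split_ifs with hj
  · rw [← Nat.cast_mul, ← Nat.cast_sub hj, intChoose_natCast_add_natCast]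
  · rw [intChoose_of_neg (by omega)]

theorem Nat.le_and_lt_add_iff_div_eq_and_mod_lt {n m W h : ℕ} (hmW : m ≤ W) :
    h * W ≤ n ∧ n < h * W + m ↔ n / W = h ∧ n % W < m := by
  rcases Nat.eq_zero_or_pos m with rfl | hm
  · simp
  have hW : 0 < W := by omega
  have hdm := Nat.div_add_mod n W
  rw [Nat.mul_comm] at hdm
  constructor
  · rintro ⟨hlo, hhi⟩
    obtain rfl : n / W = h := (Nat.div_eq_iff hW).2 ⟨hlo, by omega⟩
    omega
  · rintro ⟨rfl, hmod⟩
    omega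

theorem ite_mod_lt_eq_sum_range {n m W H : ℕ} (hmW : m ≤ W) (hn : n / W < H) :
    (if n % W < m then 1 else 0 : ℤ) =
      ∑ h ∈ range H,
        ((if (n : ℤ) ≤ h * W + m - 1 then 1 else 0) - if (n : ℤ) ≤ h * W - 1 then 1 else 0) := by
  have hterm : ∀ h : ℕ, ((if (n : ℤ) ≤ h * W + m - 1 then 1 else 0) -
      (if (n : ℤ) ≤ h * W - 1 then 1 else 0) : ℤ) = if n / W = h ∧ n % W < m then 1 else 0 := by
    intro h
    have hcast : ((h * W : ℕ) : ℤ) = h * W := Nat.cast_mul h W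
    simp only [← Nat.le_and_lt_add_iff_div_eq_and_mod_lt hmW]
    split_ifs <;> omega
  simp only [hterm, ite_and, sum_ite_eq, if_pos (mem_range.2 hn)]

theorem card_sum_mod_lt_eq (k m W : ℕ) (hmW : m ≤ W) :
    (#{f : Fin k → Fin m | (∑ i, (f i : ℕ)) % W < m} : ℤ) =
      ∑ h ∈ range (k * (m - 1) / W + 1),
        ((#{f : Fin k → Fin m | ((∑ i, (f i : ℕ) : ℕ) : ℤ) ≤ h * W + m - 1} : ℤ) -
          #{f : Fin k → Fin m | ((∑ i, (f i : ℕ) : ℕ) : ℤ) ≤ h * W - 1}) := by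
  simp only [natCast_card_filter, ← sum_sub_distrib]
  rw [sum_comm]
  refine sum_congr rfl fun f _ => ite_mod_lt_eq_sum_range hmW (Nat.lt_succ_of_le ?_)
  refine Nat.div_le_div_right ?_
  simpa using sum_le_card_nsmul univ (fun i => (f i : ℕ)) (m - 1) fun i _ => by omega

theorem card_sum_mod_two_pow_lt_eq_Fcount {q w : ℕ} (k : ℕ) (hqw : q ≤ w) :
    (#{f : Fin k → Fin (2 ^ q) | (∑ i, (f i : ℕ)) % 2 ^ w < 2 ^ q} : ℤ) = Fcount q k w := by
  rw [card_sum_mod_lt_eq _ _ _ (Nat.pow_le_pow_right two_pos hqw), Fcount]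
  refine sum_congr rfl fun h _ => ?_
  rw [card_sum_le_eq_sum_intChoose, card_sum_le_eq_sum_intChoose, ← sum_sub_distrib]
  refine sum_congr rfl fun j _ => ?_
  rw [mul_sub]
  congr 3 <;> push_cast <;> ring

theorem rotational_probability_k_addends_general
    (w : ℕ) (r : ℕ) (hrw : r ≤ w - 1)
    (k : ℕ) :
    ((Finset.univ.filter (fun a : Fin k → BitVec w =>
        (∑ i, (a i).rotateLeft r) = (∑ i, a i).rotateLeft r)).card : ℤ) =
      Fcount r k w * Fcount (w - r) k w ∧
    ((Finset.univ.filter (fun a : Fin k → BitVec w =>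
        (∑ i, (a i).rotateLeft r) = (∑ i, a i).rotateLeft r)).card : ℚ)
        / 2 ^ (k * w)
      = ((Fcount r k w * Fcount (w - r) k w : ℤ) : ℚ) / 2 ^ (k * w) := by
  obtain ⟨q, rfl⟩ : ∃ q, w = r + q := ⟨w - r, by omega⟩
  have hcount : (#{a : Fin k → BitVec (r + q) |
      ∑ i, (a i).rotateLeft r = (∑ i, a i).rotateLeft r} : ℤ) =
      Fcount r k (r + q) * Fcount q k (r + q) := by
    rw [card_sum_rotateLeft_eq, Nat.cast_mul,
      card_sum_mod_two_pow_lt_eq_Fcount k (Nat.le_add_right r q),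
      card_sum_mod_two_pow_lt_eq_Fcount k (Nat.le_add_left q r)]
  rw [Nat.add_sub_cancel_left]
  exact ⟨hcount, by rw [← hcount, Int.cast_natCast]⟩

theorem rotational_probability_k_addends
    (w : ℕ) (hw : 2 ≤ w) (r : ℕ) (hr : 1 ≤ r) (hrw : r ≤ w - 1)
    (k : ℕ) (hk : 1 ≤ k) :
    ((Finset.univ.filter (fun a : Fin k → BitVec w =>
        (∑ i, (a i).rotateLeft r) = (∑ i, a i).rotateLeft r)).card : ℤ) =
      Fcount r k w * Fcount (w - r) k w ∧
    ((Finset.univ.filter (fun a : Fin k → BitVec w =>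
        (∑ i, (a i).rotateLeft r) = (∑ i, a i).rotateLeft r)).card : ℚ)
        / 2 ^ (k * w)
      = ((Fcount r k w * Fcount (w - r) k w : ℤ) : ℚ) / 2 ^ (k * w) :=
  rotational_probability_k_addends_general w r hrw k
end

section
/- Let w ≥ 1, k ≥ 1, let 1 ≤ r ≤ w−1, set N = 2^(wk) and g = gcd(w, r), and let ρ be the permutation of the set A of k-tuples of w-bit words that rotates every component left by r. For a permutation Π of A, let C_Π be the number of x ∈ A with Π(ρ(x)) = ρ(Π(x)). Then the sum of C_Π over all N! permutations Π of A satisfies (N − 1) · Σ_Π C_Π = N! · (N + 2^(2kg) − 2^(kg+1)); equivalently, the expected number of rotational collisions of a uniformly random permutation of A is (2^(wk) + 2^(2k·gcd(w,r)) − 2^(k·gcd(w,r)+1)) / (2^(wk) − 1). -/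
/-- Componentwise left rotation by `r` of a `k`-tuple of `w`-bit words. -/
def rotTuple {w k : ℕ} (r : ℕ) (x : Fin k → BitVec w) : Fin k → BitVec w :=
  fun i => (x i).rotateLeft r

/-- The number of rotational collisions of a permutation `π` of the set of
`k`-tuples of `w`-bit words. -/
def rotCollisions {w k : ℕ} (r : ℕ) (π : Equiv.Perm (Fin k → BitVec w)) : ℕ :=
  (Finset.univ.filter (fun x : Fin k → BitVec w =>
      π (rotTuple r x) = rotTuple r (π x))).card

/-!
Exchanging the two sums, `∑_π C_π = ∑_x #{π | π (ρ x) = ρ (π x)}`. If `ρ x = x` the condition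
says that `π x` is a fixed point of `ρ`, which gives `F (N-1)!` permutations, `F` being the number
of fixed points of `ρ`. If `ρ x ≠ x`, then `c = π x` cannot be fixed and `π (ρ x) = ρ c` is forced,
which gives `(N-F)(N-2)!` permutations. So `∑_π C_π = F² (N-1)! + (N-F)² (N-2)!` for any map `ρ`.
A word is fixed by rotation by `r` iff its bits, indexed by `ZMod w`, are invariant under
translation by `r`, i.e. constant on the `gcd w r` cosets of the subgroup generated by `r`;
hence `F = 2 ^ (k * gcd w r)`.
-/

open Function

section Periodic

variable {G β : Type*} [AddGroup G] (c : G)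

def Function.periodicEquivQuotient :
    {f : G → β // Periodic f c} ≃ (G ⧸ AddSubgroup.zmultiples c → β) where
  toFun f := f.2.lift
  invFun g := ⟨g ∘ (↑), fun x => by simp⟩
  left_inv f := rfl
  right_inv g := by funext x; induction x using QuotientAddGroup.induction_on; rfl

theorem Nat.card_periodic [Finite G] :
    Nat.card {f : G → β // Periodic f c} = Nat.card β ^ (AddSubgroup.zmultiples c).index := by
  rw [Nat.card_congr (periodicEquivQuotient c), Nat.card_fun, AddSubgroup.index]

end Periodic

theorem ZMod.index_zmultiples_natCast {n : ℕ} [NeZero n] (a : ℕ) :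
    (AddSubgroup.zmultiples (a : ZMod n)).index = n.gcd a := by
  have h := (AddSubgroup.zmultiples (a : ZMod n)).index_mul_card
  rw [Nat.card_zmultiples, ZMod.addOrderOf_coe _ (NeZero.ne n), Nat.card_zmod] at h
  have hpos : 0 < n / n.gcd a :=
    Nat.div_pos (Nat.gcd_le_left _ (NeZero.pos n)) (Nat.gcd_pos_of_pos_left _ (NeZero.pos n))
  exact Nat.eq_of_mul_eq_mul_right hpos (by rw [h, Nat.mul_div_cancel' (Nat.gcd_dvd_left n a)])

namespace BitVec

/-- Bits indexed cyclically, so that rotation becomes translation. -/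
def bitsEquiv (w : ℕ) [NeZero w] : BitVec w ≃ (ZMod w → Bool) where
  toFun x i := x.getLsbD i.val
  invFun f := ofFnLE fun i : Fin w => f (i : ℕ)
  left_inv x := by ext i hi; simp [ZMod.val_natCast, Nat.mod_eq_of_lt hi, getLsbD_eq_getElem hi]
  right_inv f := by funext i; simp [ZMod.val_lt]

theorem bitsEquiv_rotateLeft {w : ℕ} [NeZero w] (x : BitVec w) (r : ℕ) (i : ZMod w) :
    bitsEquiv w (x.rotateLeft r) i = bitsEquiv w x (i - r) := by
  have hi := ZMod.val_lt i
  have hr := Nat.mod_lt r (NeZero.pos w)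
  have hsub : i - r = ((w - r % w + i.val : ℕ) : ZMod w) := by
    rw [Nat.cast_add, Nat.cast_sub hr.le, ZMod.natCast_self, ZMod.natCast_mod,
      ZMod.natCast_zmod_val]
    ring
  simp only [bitsEquiv, Equiv.coe_fn_mk, hsub, ZMod.val_natCast]
  rw [← rotateLeft_mod_eq_rotateLeft, getLsbD_rotateLeft_of_le hr]
  by_cases h : i.val < r % w
  · simp [h, Nat.mod_eq_of_lt (by omega : w - r % w + i.val < w)]
  · rw [show w - r % w + i.val = (i.val - r % w) + w by omega, Nat.add_mod_right,
      Nat.mod_eq_of_lt (show i.val - r % w < w by omega)]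
    simp [h, hi]

theorem card_rotateLeft_fixed {w : ℕ} (hw : 0 < w) (r : ℕ) :
    Fintype.card {x : BitVec w // x.rotateLeft r = x} = 2 ^ w.gcd r := by
  have : NeZero w := ⟨hw.ne'⟩
  have e : {x : BitVec w // x.rotateLeft r = x} ≃ {f : ZMod w → Bool // Periodic f r} := by
    refine (bitsEquiv w).subtypeEquiv fun x => ⟨fun hx i => ?_, fun hx => ?_⟩
    · rw [← hx, bitsEquiv_rotateLeft, add_sub_cancel_right, hx]
    · exact (bitsEquiv w).injective (funext fun i => by rw [bitsEquiv_rotateLeft, hx.sub_eq])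
  rw [← Nat.card_eq_fintype_card, Nat.card_congr e, Nat.card_periodic, Nat.card_eq_fintype_card,
    Fintype.card_bool, ZMod.index_zmultiples_natCast]

end BitVec

open Finset Nat

namespace Equiv.Perm

variable {α : Type*} [DecidableEq α]

theorem exists_apply_eq_and_apply_eq {a b c d : α} (hab : a ≠ b) (hcd : c ≠ d) :
    ∃ τ : Perm α, τ a = c ∧ τ b = d := by
  refine ⟨swap (swap a c b) d * swap a c, ?_, by simp⟩
  rw [mul_apply, swap_apply_left, swap_apply_of_ne_of_ne _ hcd]
  rwa [Ne, eq_comm, swap_apply_eq_iff, swap_apply_right, eq_comm]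

variable [Fintype α]

theorem card_fixing (s : Finset α) :
    #{π : Perm α | ∀ x ∈ s, π x = x} = (Fintype.card α - #s)! := by
  have e : Perm {x // x ∉ s} ≃ {π : Perm α // ∀ x ∈ s, π x = x} :=
    (Perm.subtypeEquivSubtypePerm _).trans (subtypeEquivRight fun π => by simp)
  rw [← Fintype.card_subtype, ← Fintype.card_congr e, Fintype.card_perm,
    Fintype.card_subtype_compl, Fintype.card_coe]

theorem card_agreeing_on (τ : Perm α) (s : Finset α) :
    #{π : Perm α | ∀ x ∈ s, π x = τ x} = (Fintype.card α - #s)! := by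
  rw [← card_fixing s]
  refine card_nbij' (τ⁻¹ * ·) (τ * ·) ?_ ?_ ?_ ?_ <;> intro π hπ <;> simp_all

theorem card_apply_eq (a c : α) : #{π : Perm α | π a = c} = (Fintype.card α - 1)! := by
  simpa using card_agreeing_on (swap a c) {a}

theorem card_apply_eq_and_apply_eq {a b c d : α} (hab : a ≠ b) (hcd : c ≠ d) :
    #{π : Perm α | π a = c ∧ π b = d} = (Fintype.card α - 2)! := by
  obtain ⟨τ, hτa, hτb⟩ := exists_apply_eq_and_apply_eq hab hcd
  simpa [hτa, hτb, hab] using card_agreeing_on τ {a, b}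

variable {σ : α → α}

theorem card_commute_apply_of_fixed {x : α} (hx : σ x = x) :
    #{π : Perm α | π (σ x) = σ (π x)} = #{c | σ c = c} * (Fintype.card α - 1)! := by
  rw [card_eq_sum_card_fiberwise (f := fun π => π x) (t := {c | σ c = c})]
  · refine sum_const_nat fun c hc => ?_
    rw [mem_filter] at hc
    rw [filter_filter, ← card_apply_eq x c]
    congr 1
    ext π
    simp only [mem_filter, mem_univ, true_and, hx, and_iff_right_iff_imp]
    rintro rfl
    exact hc.2.symm
  · intro π hπ
    simp only [coe_filter, mem_univ, true_and, Set.mem_ofPred_eq, hx] at hπ ⊢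
    exact hπ.symm

theorem card_commute_apply_of_not_fixed {x : α} (hx : σ x ≠ x) :
    #{π : Perm α | π (σ x) = σ (π x)} = #{c | σ c ≠ c} * (Fintype.card α - 2)! := by
  rw [card_eq_sum_card_fiberwise (f := fun π => π x) (t := {c | σ c ≠ c})]
  · refine sum_const_nat fun c hc => ?_
    rw [mem_filter] at hc
    rw [filter_filter, ← card_apply_eq_and_apply_eq (Ne.symm hx) (Ne.symm hc.2)]
    congr 1
    ext π
    simp only [mem_filter, mem_univ, true_and]
    constructor
    · rintro ⟨h, rfl⟩; exact ⟨rfl, h⟩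
    · rintro ⟨rfl, h⟩; exact ⟨h, rfl⟩
  · intro π hπ
    simp only [coe_filter, mem_univ, true_and, Set.mem_ofPred_eq] at hπ ⊢
    exact fun hfix => hx (π.injective (hπ.trans hfix))

theorem sum_card_commute_apply (σ : α → α) :
    ∑ π : Perm α, #{x | π (σ x) = σ (π x)} =
      #{c | σ c = c} ^ 2 * (Fintype.card α - 1)! +
        #{c | σ c ≠ c} ^ 2 * (Fintype.card α - 2)! := by
  have hswap : ∑ π : Perm α, #{x | π (σ x) = σ (π x)} =
      ∑ x, #{π : Perm α | π (σ x) = σ (π x)} := by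
    simp only [card_filter]
    exact sum_comm
  rw [hswap, ← sum_filter_add_sum_filter_not _ (fun x => σ x = x),
    sum_const_nat fun x hx => card_commute_apply_of_fixed (mem_filter.1 hx).2,
    sum_const_nat fun x hx => card_commute_apply_of_not_fixed (mem_filter.1 hx).2]
  ring

theorem sub_one_mul_sum_card_commute_apply (σ : α → α) (hα : 2 ≤ Fintype.card α) :
    ((Fintype.card α : ℤ) - 1) * ∑ π : Perm α, (#{x | π (σ x) = σ (π x)} : ℤ) =
      (Fintype.card α)! * (Fintype.card α + #{c | σ c = c} ^ 2 - 2 * #{c | σ c = c}) := by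
  obtain ⟨m, hm⟩ : ∃ m, Fintype.card α = m + 2 := ⟨_, (Nat.sub_add_cancel hα).symm⟩
  have hsplit := card_filter_add_card_filter_not (s := univ) (fun c => σ c = c)
  rw [Finset.card_univ, hm] at hsplit
  have hnot : (#{c | σ c ≠ c} : ℤ) = m + 2 - #{c | σ c = c} := by
    rw [eq_sub_iff_add_eq']; exact_mod_cast hsplit
  rw [← Nat.cast_sum, sum_card_commute_apply, hm]
  push_cast [hnot, Nat.factorial_succ]
  ring

end Equiv.Perm

theorem card_rotTuple_fixed {w : ℕ} (hw : 0 < w) (k r : ℕ) :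
    #{x : Fin k → BitVec w | rotTuple r x = x} = 2 ^ (k * w.gcd r) := by
  have e : {x : Fin k → BitVec w // rotTuple r x = x} ≃
      (Fin k → {a : BitVec w // a.rotateLeft r = a}) :=
    (Equiv.subtypeEquivRight fun x => by simp [rotTuple, funext_iff]).trans
      Equiv.subtypePiEquivPi
  rw [← Fintype.card_subtype, Fintype.card_congr e, Fintype.card_fun,
    BitVec.card_rotateLeft_fixed hw, Fintype.card_fin, ← pow_mul, mul_comm]

theorem expected_rotational_collisions_random_permutation_general
    (w : ℕ) (hw : 1 ≤ w) (k : ℕ) (hk : 1 ≤ k)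
    (r : ℕ)
    (N g : ℕ) (hN : N = 2 ^ (w * k)) (hg : g = Nat.gcd w r) :
    ((N : ℤ) - 1) * ∑ π : Equiv.Perm (Fin k → BitVec w), (rotCollisions r π : ℤ) =
      (Nat.factorial N : ℤ) * ((N : ℤ) + 2 ^ (2 * k * g) - 2 ^ (k * g + 1)) ∧
    (∑ π : Equiv.Perm (Fin k → BitVec w), (rotCollisions r π : ℚ)) /
        (Nat.factorial N : ℚ) =
      ((2 : ℚ) ^ (w * k) + 2 ^ (2 * k * Nat.gcd w r) - 2 ^ (k * Nat.gcd w r + 1)) /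
        ((2 : ℚ) ^ (w * k) - 1) := by
  subst hg
  have hcard : Fintype.card (Fin k → BitVec w) = N := by
    rw [hN, Fintype.card_fun, Fintype.card_congr BitVec.equivFin.toEquiv, Fintype.card_fin,
      Fintype.card_fin, ← pow_mul]
  have hN2 : 2 ≤ N := hN ▸ Nat.le_self_pow (Nat.mul_ne_zero (by omega) (by omega)) 2
  have key := Equiv.Perm.sub_one_mul_sum_card_commute_apply (rotTuple r) (hcard ▸ hN2)
  rw [hcard, card_rotTuple_fixed hw] at key
  have hint : ((N : ℤ) - 1) * ∑ π : Equiv.Perm (Fin k → BitVec w), (rotCollisions r π : ℤ) =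
      (Nat.factorial N : ℤ) * ((N : ℤ) + 2 ^ (2 * k * w.gcd r) - 2 ^ (k * w.gcd r + 1)) := by
    rw [show (2 : ℤ) ^ (2 * k * w.gcd r) = (2 ^ (k * w.gcd r)) ^ 2 by ring,
      show (2 : ℤ) ^ (k * w.gcd r + 1) = 2 * 2 ^ (k * w.gcd r) by ring]
    exact_mod_cast key
  refine ⟨hint, ?_⟩
  subst hN
  have hN1 : (2 : ℚ) ^ (w * k) - 1 ≠ 0 := by
    have : (2 : ℚ) ≤ 2 ^ (w * k) := by exact_mod_cast hN2
    linarith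
  rw [div_eq_div_iff (by positivity) hN1]
  have := congrArg (Int.cast : ℤ → ℚ) hint
  push_cast at this
  linear_combination this

theorem expected_rotational_collisions_random_permutation
    (w : ℕ) (hw : 1 ≤ w) (k : ℕ) (hk : 1 ≤ k)
    (r : ℕ) (hr : 1 ≤ r) (hrw : r ≤ w - 1)
    (N g : ℕ) (hN : N = 2 ^ (w * k)) (hg : g = Nat.gcd w r) :
    ((N : ℤ) - 1) * ∑ π : Equiv.Perm (Fin k → BitVec w), (rotCollisions r π : ℤ) =
      (Nat.factorial N : ℤ) * ((N : ℤ) + 2 ^ (2 * k * g) - 2 ^ (k * g + 1)) ∧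
    (∑ π : Equiv.Perm (Fin k → BitVec w), (rotCollisions r π : ℚ)) /
        (Nat.factorial N : ℚ) =
      ((2 : ℚ) ^ (w * k) + 2 ^ (2 * k * Nat.gcd w r) - 2 ^ (k * Nat.gcd w r + 1)) /
        ((2 : ℚ) ^ (w * k) - 1) :=
  expected_rotational_collisions_random_permutation_general w hw k hk r N g hN hg
end
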